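/- For positive reals λ and γ, define f(λ, γ) = 4γ²[(γ−1)² + (γ+1)λ] / [(λ+1+γ − √((λ+γ+1)² − 4γ))² · ((λ+γ+1)² − 4γ)^{3/2}]. Then inf over λ > 0 of f(λ, γ) ≤ max{1 + (5/27)γ, (5/27) + γ}; specifically, f(1 − γ/2, γ) = 2(γ² − 3γ + 4)/(2 − γ/2)³ ≤ 1 + (5/27)γ for γ ∈ (0, 1], and f(γ − 1/2, γ) = 2γ²(4γ² − 3γ + 1)/(2γ − 1/2)³ ≤ γ + 5/27 for γ > 1. -/

import Mathlib

/-! The two choices of `λ` make the discriminant `(λ + γ + 1)² − 4γ` a perfect square, which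
removes both the square root and the power `3/2`. The resulting rational bounds reduce to
`γ (1 − γ) (5γ² − 28γ + 320) ≥ 0` and `(γ − 1) (320γ² − 28γ + 5) ≥ 0`, tight at `γ = 1`. -/

noncomputable def asymMSEtrtr (lam γ : ℝ) : ℝ :=
  4 * γ ^ 2 * ((γ - 1) ^ 2 + (γ + 1) * lam) /
    ((lam + 1 + γ - Real.sqrt ((lam + γ + 1) ^ 2 - 4 * γ)) ^ 2 *
      ((lam + γ + 1) ^ 2 - 4 * γ) ^ ((3 : ℝ) / 2))

lemma asymMSEtrtr_nonneg {lam γ : ℝ} (hlam : 0 ≤ lam) (hγ : 0 ≤ γ) :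
    0 ≤ asymMSEtrtr lam γ := by
  have hdisc : 0 ≤ (lam + γ + 1) ^ 2 - 4 * γ := by
    nlinarith [sq_nonneg (γ - 1), mul_nonneg hlam hγ]
  unfold asymMSEtrtr
  positivity

lemma asymMSEtrtr_of_disc_eq_sq {lam γ s : ℝ} (hs : 0 ≤ s)
    (h : (lam + γ + 1) ^ 2 - 4 * γ = s ^ 2) :
    asymMSEtrtr lam γ =
      4 * γ ^ 2 * ((γ - 1) ^ 2 + (γ + 1) * lam) / ((lam + 1 + γ - s) ^ 2 * s ^ 3) := by
  have hpow : (s ^ 2) ^ ((3 : ℝ) / 2) = s ^ 3 := by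
    rw [← Real.rpow_natCast s 2, ← Real.rpow_mul hs]
    norm_num
  rw [asymMSEtrtr, h, Real.sqrt_sq hs, hpow]

lemma asymMSEtrtr_one_sub_half {γ : ℝ} (hγ₀ : γ ≠ 0) (hγ : γ ≤ 4) :
    asymMSEtrtr (1 - γ / 2) γ = 2 * (γ ^ 2 - 3 * γ + 4) / (2 - γ / 2) ^ 3 := by
  rw [asymMSEtrtr_of_disc_eq_sq (s := 2 - γ / 2) (by linarith) (by ring),
    show 1 - γ / 2 + 1 + γ - (2 - γ / 2) = γ by ring]
  field_simp
  ring

lemma asymMSEtrtr_sub_half {γ : ℝ} (hγ : 1 / 4 ≤ γ) :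
    asymMSEtrtr (γ - 1 / 2) γ = 2 * γ ^ 2 * (4 * γ ^ 2 - 3 * γ + 1) / (2 * γ - 1 / 2) ^ 3 := by
  rw [asymMSEtrtr_of_disc_eq_sq (s := 2 * γ - 1 / 2) (by linarith) (by ring),
    show γ - 1 / 2 + 1 + γ - (2 * γ - 1 / 2) = 1 by ring]
  ring

lemma rate_le_of_le_one {γ : ℝ} (hγ₀ : 0 ≤ γ) (hγ₁ : γ ≤ 1) :
    2 * (γ ^ 2 - 3 * γ + 4) / (2 - γ / 2) ^ 3 ≤ 1 + (5 / 27) * γ := by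
  have hgap : (1 + (5 / 27) * γ) * (2 - γ / 2) ^ 3 - 2 * (γ ^ 2 - 3 * γ + 4)
      = γ * (1 - γ) * (5 * γ ^ 2 - 28 * γ + 320) / 216 := by ring
  have hquad : 0 ≤ 5 * γ ^ 2 - 28 * γ + 320 := by nlinarith [sq_nonneg (γ - 3)]
  rw [div_le_iff₀ (by nlinarith)]
  nlinarith [mul_nonneg (mul_nonneg hγ₀ (sub_nonneg.2 hγ₁)) hquad]

lemma rate_le_of_one_le {γ : ℝ} (hγ : 1 ≤ γ) :
    2 * γ ^ 2 * (4 * γ ^ 2 - 3 * γ + 1) / (2 * γ - 1 / 2) ^ 3 ≤ γ + 5 / 27 := by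
  have hgap : (γ + 5 / 27) * (2 * γ - 1 / 2) ^ 3 - 2 * γ ^ 2 * (4 * γ ^ 2 - 3 * γ + 1)
      = (γ - 1) * (320 * γ ^ 2 - 28 * γ + 5) / 216 := by ring
  have hquad : 0 ≤ 320 * γ ^ 2 - 28 * γ + 5 := by nlinarith [sq_nonneg (γ - 1)]
  rw [div_le_iff₀ (by nlinarith)]
  nlinarith [mul_nonneg (sub_nonneg.2 hγ) hquad]

lemma sInf_asymMSEtrtr_le {lam γ : ℝ} (hlam : 0 < lam) (hγ : 0 ≤ γ) :
    sInf {y : ℝ | ∃ lam : ℝ, 0 < lam ∧ y = asymMSEtrtr lam γ} ≤ asymMSEtrtr lam γ :=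
  csInf_le ⟨0, by rintro y ⟨l, hl, rfl⟩; exact asymMSEtrtr_nonneg hl.le hγ⟩ ⟨lam, hlam, rfl⟩

/-- The infimum over `λ > 0` of the non-splitting asymptotic MSE coefficient `f(λ,γ)` is at most
`max{1 + (5/27)γ, 5/27 + γ}`; specifically `f(1 − γ/2, γ) = 2(γ²−3γ+4)/(2−γ/2)³ ≤ 1 + (5/27)γ`
for `γ ∈ (0,1]` and `f(γ − 1/2, γ) = 2γ²(4γ²−3γ+1)/(2γ−1/2)³ ≤ γ + 5/27` for `γ > 1`. -/
theorem trtr_optimal_rate_upper_bound (γ : ℝ) (hγ : 0 < γ) :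
    sInf {y : ℝ | ∃ lam : ℝ, 0 < lam ∧ y = asymMSEtrtr lam γ}
        ≤ max (1 + (5 / 27) * γ) (5 / 27 + γ) ∧
      (γ ≤ 1 →
        asymMSEtrtr (1 - γ / 2) γ = 2 * (γ ^ 2 - 3 * γ + 4) / (2 - γ / 2) ^ 3 ∧
          asymMSEtrtr (1 - γ / 2) γ ≤ 1 + (5 / 27) * γ) ∧
      (1 < γ →
        asymMSEtrtr (γ - 1 / 2) γ = 2 * γ ^ 2 * (4 * γ ^ 2 - 3 * γ + 1) / (2 * γ - 1 / 2) ^ 3 ∧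
          asymMSEtrtr (γ - 1 / 2) γ ≤ γ + 5 / 27) := by
  have low (h : γ ≤ 1) : asymMSEtrtr (1 - γ / 2) γ ≤ 1 + (5 / 27) * γ :=
    (asymMSEtrtr_one_sub_half hγ.ne' (by linarith)).trans_le (rate_le_of_le_one hγ.le h)
  have high (h : 1 < γ) : asymMSEtrtr (γ - 1 / 2) γ ≤ γ + 5 / 27 :=
    (asymMSEtrtr_sub_half (by linarith)).trans_le (rate_le_of_one_le h.le)
  refine ⟨?_, fun h => ⟨asymMSEtrtr_one_sub_half hγ.ne' (by linarith), low h⟩,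
    fun h => ⟨asymMSEtrtr_sub_half (by linarith), high h⟩⟩
  rcases le_or_gt γ 1 with h | h
  · exact (sInf_asymMSEtrtr_le (by linarith) hγ.le).trans ((low h).trans (le_max_left _ _))
  · exact (sInf_asymMSEtrtr_le (by linarith) hγ.le).trans
      ((high h).trans (by rw [add_comm]; exact le_max_right _ _))
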